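/- The toy theory of Section 5 is no-signaling: for any initial pure state and any finite measurement sequence formed by interleaving a sequence of Alice's measurements (drawn from {A₁, A₂}) with a sequence of Bob's measurements (drawn from {B₁, B₂}), the joint probability distribution of the outcomes of Bob's measurements depends only on Bob's subsequence and not on how many or which measurements Alice performs or on the interleaving; and symmetrically with the roles of Alice and Bob exchanged. -/

import Mathlib

/-! ## The toy theory of Section 5

Hidden values: `und` = ∅ (undetermined), `pm`/`pp` = potential value −1/+1,
`am`/`ap` = actual value −1/+1. -/

/-- The five hidden values `V = {∅, −, +, ⊖, ⊕}`. -/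
inductive HV
  | und | pm | pp | am | ap
  deriving DecidableEq

instance : Fintype HV where
  elems := {.und, .pm, .pp, .am, .ap}
  complete := by intro x; cases x <;> simp

/-- The four ±1-valued observables. -/
inductive Obs
  | A1 | A2 | B1 | B2
  deriving DecidableEq

instance : Fintype Obs where
  elems := {.A1, .A2, .B1, .B2}
  complete := by intro x; cases x <;> simp

/-- A pure state: a hidden value for each observable. -/
abbrev PState := Obs → HV

/-- Construct a pure state from hidden values of `A₁, A₂, B₁, B₂`. -/
def mkS (a₁ a₂ b₁ b₂ : HV) : PState := fun x =>
  match x with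
  | .A1 => a₁
  | .A2 => a₂
  | .B1 => b₁
  | .B2 => b₂

/-- The completely undetermined state `(∅, ∅, ∅, ∅)`. -/
def initS : PState := fun _ => HV.und

/-- The other observable of the same party. -/
def partner : Obs → Obs
  | .A1 => .A2
  | .A2 => .A1
  | .B1 => .B2
  | .B2 => .B1

/-- The actual hidden value recording outcome `o ∈ {-1, 1}`. -/
def actual (o : ℤ) : HV := if o = 1 then .ap else .am

/-- Whether a hidden value is a potential value (− or +). -/
def isPot : HV → Bool
  | .pm => true
  | .pp => true
  | _ => false

/-- Probability of the outcome `o` when measuring observable `x` on state `s`: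
uniform on ±1 if the hidden value is undetermined, otherwise the potential or actual
value occurs with certainty. -/
noncomputable def outProb (x : Obs) (s : PState) (o : ℤ) : ℝ :=
  match s x with
  | .und => if o = 1 ∨ o = -1 then 1/2 else 0
  | .pm => if o = -1 then 1 else 0
  | .pp => if o = 1 then 1 else 0
  | .am => if o = -1 then 1 else 0
  | .ap => if o = 1 then 1 else 0

/-- Post-measurement states on the completely undetermined state `(∅,∅,∅,∅)`
(Table 3 of the paper). -/
def table : Obs → ℤ → PState
  | .A1, o => if o = 1 then mkS .ap .und .pp .pp else mkS .am .und .pm .pm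
  | .A2, o => if o = 1 then mkS .und .ap .pp .pm else mkS .und .am .pm .pp
  | .B1, o => if o = 1 then mkS .pp .pp .ap .und else mkS .pm .pm .am .und
  | .B2, o => if o = 1 then mkS .pp .pm .und .ap else mkS .pm .pp .und .am

/-- The post-measurement state after measuring `x` with outcome `o` on state `s`,
where the partner observable of `x` receives the hidden value `w`: the measured
observable acquires the actual value matching the outcome, and all other hidden
values stay untouched. -/
def post (x : Obs) (o : ℤ) (s : PState) (w : HV) : PState :=
  Function.update (Function.update s (partner x) w) x (actual o)

/-- The measurement kernel: `stepProb x s o t` is the probability that measuring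
observable `x` on pre-measurement state `s` gives outcome `o` and post-measurement
state `t`.  On `(∅,∅,∅,∅)` it is given by Table 3; on any other state the outcome
is distributed according to `outProb`, the measured observable acquires the actual
value matching the outcome, all other hidden values stay untouched, except that a
potential value of the partner observable flips its sign with probability 1/2. -/
noncomputable def stepProb (x : Obs) (s : PState) (o : ℤ) (t : PState) : ℝ :=
  if s = initS then
    if (o = 1 ∨ o = -1) ∧ t = table x o then 1/2 else 0
  else
    outProb x s o *
      (if isPot (s (partner x)) then
        (if t = post x o s HV.pm then 1/2 else 0) +
          (if t = post x o s HV.pp then 1/2 else 0)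
      else
        if t = post x o s (s (partner x)) then 1 else 0)

/-- Probability that the measurement sequence `ms` on initial state `s` produces
the outcome sequence `os`. -/
noncomputable def seqProb : PState → List Obs → List ℤ → ℝ
  | _, [], [] => 1
  | s, x :: ms, o :: os => ∑ t : PState, stepProb x s o t * seqProb t ms os
  | _, _, _ => 0

/-- Whether an observable belongs to Bob. -/
def isBob : Obs → Bool
  | .B1 => true
  | .B2 => true
  | _ => false

/-- Whether an observable belongs to Alice. -/
def isAlice : Obs → Bool
  | .A1 => true
  | .A2 => true
  | _ => false

/-- `margProb keep s ms os` is the probability that, performing the measurement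
sequence `ms` on initial state `s`, the measurements satisfying `keep` (in order)
produce the outcome sequence `os`; the outcomes of the remaining measurements are
marginalized over. -/
noncomputable def margProb (keep : Obs → Bool) : PState → List Obs → List ℤ → ℝ
  | _, [], [] => 1
  | _, [], _ :: _ => 0
  | s, x :: ms, os =>
    if keep x then
      match os with
      | [] => 0
      | o :: os' => ∑ t : PState, stepProb x s o t * margProb keep t ms os'
    else
      ∑ t : PState, (∑ o ∈ ({-1, 1} : Finset ℤ), stepProb x s o t) * margProb keep t ms os

/-! ### Auxiliary development for the no-signaling proof -/

namespace NoSig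

/-- Outcome probability as a function of the hidden value only. -/
noncomputable def q : HV → ℤ → ℝ
  | .und, o => if o = 1 ∨ o = -1 then 1/2 else 0
  | .pm, o => if o = -1 then 1 else 0
  | .pp, o => if o = 1 then 1 else 0
  | .am, o => if o = -1 then 1 else 0
  | .ap, o => if o = 1 then 1 else 0

lemma outProb_eq (x : Obs) (s : PState) (o : ℤ) : outProb x s o = q (s x) o := by
  cases h : s x <;> simp [outProb, q, h]

lemma q_total (b : HV) : q b (-1) + q b 1 = 1 := by
  cases b <;> norm_num [q]

lemma q_flip (o : ℤ) : q .pm o + q .pp o = 2 * q .und o := by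
  simp only [q]
  split_ifs <;> first | ring1 | (exfalso; omega)

lemma partner_ne (u : Obs) : partner u ≠ u := by cases u <;> simp [partner]

lemma partner_invol (u : Obs) : partner (partner u) = u := by cases u <;> rfl

lemma post_self (x : Obs) (o : ℤ) (s : PState) (w : HV) : post x o s w x = actual o := by
  simp [post]

lemma post_partner (x : Obs) (o : ℤ) (s : PState) (w : HV) :
    post x o s w (partner x) = w := by
  unfold post
  rw [Function.update_of_ne (partner_ne x), Function.update_self]

lemma post_other (x : Obs) (o : ℤ) (s : PState) (w : HV) (y : Obs)
    (h1 : y ≠ x) (h2 : y ≠ partner x) : post x o s w y = s y := by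
  unfold post
  rw [Function.update_of_ne h1, Function.update_of_ne h2]

lemma table_self (u : Obs) (o : ℤ) : table u o u = actual o := by
  cases u <;> by_cases h : o = 1 <;> simp [table, h, mkS, actual]

lemma table_partner (u : Obs) (o : ℤ) : table u o (partner u) = .und := by
  cases u <;> by_cases h : o = 1 <;> simp [table, partner, h, mkS]

lemma sum_delta (a : PState) (c : ℝ) (f : PState → ℝ) :
    (∑ t : PState, (if t = a then c else 0) * f t) = c * f a := by
  rw [Finset.sum_eq_single a (fun b _ hb => by simp [hb])
    (fun ha => absurd (Finset.mem_univ a) ha)]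
  simp

lemma step_sum (x : Obs) (s : PState) (o : ℤ) (f : PState → ℝ) (hs : ¬ s = initS) :
    (∑ t : PState, stepProb x s o t * f t) =
      outProb x s o *
        (if isPot (s (partner x)) then (f (post x o s .pm) + f (post x o s .pp)) / 2
         else f (post x o s (s (partner x)))) := by
  simp only [stepProb, if_neg hs]
  by_cases hp : isPot (s (partner x))
  · simp only [if_pos hp]
    have key : ∀ t : PState,
        outProb x s o * ((if t = post x o s .pm then (1:ℝ)/2 else 0)
            + (if t = post x o s .pp then (1:ℝ)/2 else 0)) * f t
        = (if t = post x o s .pm then (1:ℝ)/2 else 0) * (outProb x s o * f t)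
            + (if t = post x o s .pp then (1:ℝ)/2 else 0) * (outProb x s o * f t) := by
      intro t; ring1
    rw [Finset.sum_congr rfl fun t _ => key t, Finset.sum_add_distrib, sum_delta, sum_delta]
    ring1
  · simp only [if_neg hp]
    have key : ∀ t : PState,
        outProb x s o * (if t = post x o s (s (partner x)) then (1:ℝ) else 0) * f t
        = (if t = post x o s (s (partner x)) then (1:ℝ) else 0) * (outProb x s o * f t) := by
      intro t; ring1
    rw [Finset.sum_congr rfl fun t _ => key t, sum_delta]
    ring1

lemma step_sum_init (x : Obs) (o : ℤ) (f : PState → ℝ) :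
    (∑ t : PState, stepProb x initS o t * f t) =
      if o = 1 ∨ o = -1 then f (table x o) / 2 else 0 := by
  simp only [stepProb, eq_self_iff_true, if_true]
  by_cases ho : o = 1 ∨ o = -1
  · have key : ∀ t : PState,
        (if (o = 1 ∨ o = -1) ∧ t = table x o then (1:ℝ)/2 else 0)
          = (if t = table x o then (1:ℝ)/2 else 0) := by
      intro t; simp [ho]
    rw [Finset.sum_congr rfl fun t _ => by rw [key t], sum_delta, if_pos ho]
    ring1
  · have key : ∀ t : PState,
        (if (o = 1 ∨ o = -1) ∧ t = table x o then (1:ℝ)/2 else 0) * f t = 0 := by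
      intro t; simp [ho]
    rw [Finset.sum_congr rfl fun t _ => key t, if_neg ho]
    simp

/-- The reduced one-party value function. -/
noncomputable def F (u : Obs) : List Obs → HV → HV → List ℤ → ℝ
  | [], _, _, os => if os = [] then 1 else 0
  | x :: ms, b1, b2, os =>
    if x = u then
      match os with
      | [] => 0
      | o :: os' =>
        q b1 o * (if isPot b2 then (F u ms (actual o) .pm os' + F u ms (actual o) .pp os') / 2
                  else F u ms (actual o) b2 os')
    else if x = partner u then
      match os with
      | [] => 0
      | o :: os' =>
        q b2 o * (if isPot b1 then (F u ms .pm (actual o) os' + F u ms .pp (actual o) os') / 2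
                  else F u ms b1 (actual o) os')
    else F u ms b1 b2 os

lemma F_nil (u : Obs) (b1 b2 : HV) (os : List ℤ) :
    F u [] b1 b2 os = if os = [] then 1 else 0 := by simp [F]

lemma F_self_nil (u : Obs) (ms : List Obs) (b1 b2 : HV) :
    F u (u :: ms) b1 b2 [] = 0 := by simp [F]

lemma F_self (u : Obs) (ms : List Obs) (b1 b2 : HV) (o : ℤ) (os' : List ℤ) :
    F u (u :: ms) b1 b2 (o :: os') =
      q b1 o * (if isPot b2 then (F u ms (actual o) .pm os' + F u ms (actual o) .pp os') / 2
                else F u ms (actual o) b2 os') := by simp [F]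

lemma F_partner_nil (u : Obs) (ms : List Obs) (b1 b2 : HV) :
    F u (partner u :: ms) b1 b2 [] = 0 := by simp [F, partner_ne u]

lemma F_partner (u : Obs) (ms : List Obs) (b1 b2 : HV) (o : ℤ) (os' : List ℤ) :
    F u (partner u :: ms) b1 b2 (o :: os') =
      q b2 o * (if isPot b1 then (F u ms .pm (actual o) os' + F u ms .pp (actual o) os') / 2
                else F u ms b1 (actual o) os') := by simp [F, partner_ne u]

lemma F_other (u x : Obs) (ms : List Obs) (b1 b2 : HV) (os : List ℤ)
    (h1 : ¬ x = u) (h2 : ¬ x = partner u) :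
    F u (x :: ms) b1 b2 os = F u ms b1 b2 os := by simp [F, h1, h2]

lemma isPot_pm : isPot .pm = true := rfl
lemma isPot_pp : isPot .pp = true := rfl
lemma isPot_und : isPot .und = false := rfl

lemma F_flip (u : Obs) : ∀ (ms : List Obs) (b : HV) (os : List ℤ),
    (F u ms b .pm os + F u ms b .pp os = 2 * F u ms b .und os) ∧
    (F u ms .pm b os + F u ms .pp b os = 2 * F u ms .und b os) := by
  intro ms
  induction ms with
  | nil =>
    intro b os
    cases os <;> constructor <;> simp [F_nil] <;> ring1
  | cons x ms ih =>
    intro b os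
    by_cases hxu : x = u
    · subst hxu
      cases os with
      | nil => constructor <;> simp [F_self_nil]
      | cons o os' =>
        constructor
        · simp only [F_self, isPot_pm, isPot_pp, isPot_und, if_true, if_false,
            Bool.false_eq_true]
          linear_combination q b o * (ih (actual o) os').1
        · simp only [F_self]
          linear_combination (if isPot b then
              (F x ms (actual o) .pm os' + F x ms (actual o) .pp os') / 2
            else F x ms (actual o) b os') * q_flip o
    · by_cases hxp : x = partner u
      · subst hxp
        cases os with
        | nil => constructor <;> simp [F_partner_nil]
        | cons o os' =>
          constructor
          · simp only [F_partner]
            linear_combination (if isPot b then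
                (F u ms .pm (actual o) os' + F u ms .pp (actual o) os') / 2
              else F u ms b (actual o) os') * q_flip o
          · simp only [F_partner, isPot_pm, isPot_pp, isPot_und, if_true, if_false,
              Bool.false_eq_true]
            linear_combination q b o * (ih (actual o) os').2
      · simp only [F_other u x ms _ _ _ hxu hxp]
        exact ih b os

lemma F_corr (u : Obs) : ∀ (ms : List Obs) (os : List ℤ),
    F u ms .pm .pm os + F u ms .pp .pp os = F u ms .pm .pp os + F u ms .pp .pm os := by
  intro ms
  induction ms with
  | nil => intro os; cases os <;> simp [F_nil]
  | cons x ms ih =>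
    intro os
    by_cases hxu : x = u
    · subst hxu
      cases os with
      | nil => simp [F_self_nil]
      | cons o os' =>
        simp only [F_self, isPot_pm, isPot_pp, if_true]
        try ring1
    · by_cases hxp : x = partner u
      · subst hxp
        cases os with
        | nil => simp [F_partner_nil]
        | cons o os' =>
          simp only [F_partner, isPot_pm, isPot_pp, if_true]
          try ring1
      · simp only [F_other u x ms _ _ _ hxu hxp]
        exact ih os

lemma F_mix1 (u : Obs) (ms : List Obs) (os : List ℤ) :
    F u ms .und .und os = (F u ms .pm .pm os + F u ms .pp .pp os) / 2 := by
  have h1 := (F_flip u ms .und os).2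
  have h2 := (F_flip u ms .pm os).1
  have h3 := (F_flip u ms .pp os).1
  have h4 := F_corr u ms os
  linarith

lemma F_mix2 (u : Obs) (ms : List Obs) (os : List ℤ) :
    F u ms .und .und os = (F u ms .pm .pp os + F u ms .pp .pm os) / 2 := by
  have h4 := F_corr u ms os
  have := F_mix1 u ms os
  linarith

/-- The keep-predicate of the party of `u`. -/
def keepF (u : Obs) : Obs → Bool := fun x => x = u || x = partner u

end NoSig

namespace NoSig

lemma keepF_self (u : Obs) : keepF u u = true := by simp [keepF]

lemma keepF_partner (u : Obs) : keepF u (partner u) = true := by simp [keepF]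

lemma keepF_other (u x : Obs) (h1 : ¬ x = u) (h2 : ¬ x = partner u) :
    keepF u x = false := by simp [keepF, h1, h2]

lemma margProb_cons_keep_nil (k : Obs → Bool) (s : PState) (x : Obs) (ms : List Obs)
    (hk : k x = true) : margProb k s (x :: ms) [] = 0 := by
  simp [margProb, hk]

lemma margProb_cons_keep (k : Obs → Bool) (s : PState) (x : Obs) (ms : List Obs)
    (o : ℤ) (os' : List ℤ) (hk : k x = true) :
    margProb k s (x :: ms) (o :: os') =
      ∑ t : PState, stepProb x s o t * margProb k t ms os' := by
  simp [margProb, hk]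

lemma margProb_cons_skip (k : Obs → Bool) (s : PState) (x : Obs) (ms : List Obs)
    (os : List ℤ) (hk : k x = false) :
    margProb k s (x :: ms) os =
      ∑ t : PState, (∑ o ∈ ({-1, 1} : Finset ℤ), stepProb x s o t) * margProb k t ms os := by
  simp [margProb, hk]

lemma table_partner' (u : Obs) (o : ℤ) : table (partner u) o u = HV.und := by
  have := table_partner (partner u) o
  rwa [partner_invol] at this

lemma post_partner' (u : Obs) (o : ℤ) (s : PState) (w : HV) :
    post (partner u) o s w u = w := by
  have := post_partner (partner u) o s w
  rwa [partner_invol] at this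

lemma master (u : Obs) : ∀ (ms : List Obs) (os : List ℤ) (s : PState),
    margProb (keepF u) s ms os = F u ms (s u) (s (partner u)) os := by
  intro ms
  induction ms with
  | nil =>
    intro os s
    cases os with
    | nil => simp [margProb, F_nil]
    | cons o os' => simp [margProb, F_nil]
  | cons x ms ih =>
    intro os s
    by_cases hxu : x = u
    · subst hxu
      cases os with
      | nil => rw [margProb_cons_keep_nil _ _ _ _ (keepF_self x), F_self_nil]
      | cons o os' =>
        rw [margProb_cons_keep _ _ _ _ _ _ (keepF_self x), F_self,
          Finset.sum_congr rfl fun t _ => by rw [ih os' t]]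
        by_cases hs : s = initS
        · subst hs
          rw [step_sum_init x o (fun t => F x ms (t x) (t (partner x)) os')]
          simp only [table_self, table_partner, initS, isPot_und, Bool.false_eq_true,
            if_false, q]
          split_ifs with h <;> ring1
        · rw [step_sum x s o (fun t => F x ms (t x) (t (partner x)) os') hs]
          simp only [post_self, post_partner, outProb_eq]
    · by_cases hxp : x = partner u
      · subst hxp
        cases os with
        | nil => rw [margProb_cons_keep_nil _ _ _ _ (keepF_partner u), F_partner_nil]
        | cons o os' =>
          rw [margProb_cons_keep _ _ _ _ _ _ (keepF_partner u), F_partner,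
            Finset.sum_congr rfl fun t _ => by rw [ih os' t]]
          by_cases hs : s = initS
          · subst hs
            rw [step_sum_init (partner u) o (fun t => F u ms (t u) (t (partner u)) os')]
            simp only [table_self, table_partner', initS, isPot_und, Bool.false_eq_true,
              if_false, q]
            split_ifs with h <;> ring1
          · rw [step_sum (partner u) s o (fun t => F u ms (t u) (t (partner u)) os') hs]
            simp only [post_self, post_partner', partner_invol, outProb_eq]
      · have hk := keepF_other u x hxu hxp
        rw [margProb_cons_skip _ _ _ _ _ hk, F_other u x ms _ _ _ hxu hxp,
          Finset.sum_congr rfl fun t _ => by rw [ih os t]]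
        have hsplit : ∀ t : PState,
            (∑ o ∈ ({-1, 1} : Finset ℤ), stepProb x s o t) * F u ms (t u) (t (partner u)) os
              = stepProb x s (-1) t * F u ms (t u) (t (partner u)) os
                + stepProb x s 1 t * F u ms (t u) (t (partner u)) os := by
          intro t
          rw [Finset.sum_pair (by norm_num : (-1 : ℤ) ≠ 1), add_mul]
        rw [Finset.sum_congr rfl fun t _ => hsplit t, Finset.sum_add_distrib]
        by_cases hs : s = initS
        · subst hs
          rw [step_sum_init x (-1) (fun t => F u ms (t u) (t (partner u)) os),
            step_sum_init x 1 (fun t => F u ms (t u) (t (partner u)) os),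
            if_pos (show ((-1 : ℤ) = 1 ∨ (-1 : ℤ) = -1) by norm_num),
            if_pos (show ((1 : ℤ) = 1 ∨ (1 : ℤ) = -1) by norm_num)]
          simp only [initS]
          cases u <;> cases x <;>
            first
              | exact absurd rfl hxu
              | exact absurd rfl hxp
              | (norm_num [table, mkS, partner]
                 linarith [F_mix1 Obs.A1 ms os, F_mix1 Obs.A2 ms os, F_mix1 Obs.B1 ms os,
                   F_mix1 Obs.B2 ms os, F_mix2 Obs.A1 ms os, F_mix2 Obs.A2 ms os,
                   F_mix2 Obs.B1 ms os, F_mix2 Obs.B2 ms os])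
        · have h1 : ¬ u = x := fun h => hxu h.symm
          have h2 : ¬ u = partner x := by cases u <;> cases x <;> simp_all [partner]
          have h3 : ¬ partner u = x := by cases u <;> cases x <;> simp_all [partner]
          have h4 : ¬ partner u = partner x := by cases u <;> cases x <;> simp_all [partner]
          rw [step_sum x s (-1) (fun t => F u ms (t u) (t (partner u)) os) hs,
            step_sum x s 1 (fun t => F u ms (t u) (t (partner u)) os) hs]
          have hpost : ∀ (o : ℤ) (w : HV),
              F u ms (post x o s w u) (post x o s w (partner u)) os
                = F u ms (s u) (s (partner u)) os := by
            intro o w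
            rw [post_other x o s w u h1 h2, post_other x o s w (partner u) h3 h4]
          simp only [hpost, outProb_eq]
          have ht := q_total (s x)
          split_ifs with h
          · linear_combination F u ms (s u) (s (partner u)) os * ht
          · linear_combination F u ms (s u) (s (partner u)) os * ht

lemma F_filter (u : Obs) : ∀ (ms : List Obs) (b1 b2 : HV) (os : List ℤ),
    F u ms b1 b2 os = F u (ms.filter (keepF u)) b1 b2 os := by
  intro ms
  induction ms with
  | nil => intro b1 b2 os; simp
  | cons x ms ih =>
    intro b1 b2 os
    by_cases hxu : x = u
    · subst hxu
      rw [List.filter_cons_of_pos (keepF_self x)]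
      cases os with
      | nil => rw [F_self_nil, F_self_nil]
      | cons o os' => rw [F_self, F_self]; simp only [ih]
    · by_cases hxp : x = partner u
      · subst hxp
        rw [List.filter_cons_of_pos (keepF_partner u)]
        cases os with
        | nil => rw [F_partner_nil, F_partner_nil]
        | cons o os' => rw [F_partner, F_partner]; simp only [ih]
      · rw [List.filter_cons_of_neg (by simp [keepF_other u x hxu hxp]),
          F_other u x ms _ _ _ hxu hxp]
        exact ih b1 b2 os

end NoSig

/-- Proposition 1 of the paper. The toy theory is no-signaling:
for any initial pure state, the joint outcome distribution of Bob's measurements in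
any measurement sequence depends only on Bob's subsequence, not on how many or which
measurements Alice performs nor on the interleaving; and symmetrically for Alice. -/
theorem no_signaling (s : PState) (ms ms' : List Obs) (os : List ℤ) :
    (ms.filter isBob = ms'.filter isBob →
      margProb isBob s ms os = margProb isBob s ms' os) ∧
    (ms.filter isAlice = ms'.filter isAlice →
      margProb isAlice s ms os = margProb isAlice s ms' os) := by
  have hBob : isBob = NoSig.keepF .B1 := by
    funext y; cases y <;> rfl
  have hAlice : isAlice = NoSig.keepF .A1 := by
    funext y; cases y <;> rfl
  constructor
  · intro h
    rw [hBob] at h ⊢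
    rw [NoSig.master, NoSig.F_filter, h, ← NoSig.F_filter, ← NoSig.master]
  · intro h
    rw [hAlice] at h ⊢
    rw [NoSig.master, NoSig.F_filter, h, ← NoSig.F_filter, ← NoSig.master]
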